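/- arXiv:2112.11752 — 2 statements merged into one kernel-verified Lean document; each statement's English description precedes it below -/
import Mathlib

section
/- Let d ≥ 1 and 0 < ε < 1/d. Let (x_n)_{n≥1} be a sequence in [0,1)^d whose discrepancy satisfies D_N(x_n) = o(N^{−(1−ε)}) as N → ∞, i.e. N^{1−ε} · D_N(x_n) → 0. Then (x_n) has converging number variance for the exponent α = (1−ε)/d with respect to ‖·‖_∞; that is, for every s > 0, lim_{N→∞} #{(l,m) : 1 ≤ l, m ≤ N, l ≠ m, ‖x_l − x_m‖_∞ ≤ s/N^{α}} / (N² · (2s/N^{α})^d) = 1. -/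
open scoped Classical

/-- Distance from `x` to the nearest integer. -/
noncomputable def nint (x : ℝ) : ℝ := ⨅ k : ℤ, |x - (k : ℝ)|

/-- Maximum (sup) torus norm on `ℝ^d` built from the nearest-integer distance. -/
noncomputable def supNint {d : ℕ} (y : Fin d → ℝ) : ℝ := ⨆ i, nint (y i)

/-- Number of ordered pairs `(l,m)`, `1 ≤ l,m ≤ N`, `l ≠ m`, with
`‖x_l - x_m‖_∞ ≤ r`. -/
noncomputable def pairCount (d : ℕ) (x : ℕ → Fin d → ℝ) (N : ℕ) (r : ℝ) : ℕ :=
  (((Finset.Icc 1 N) ×ˢ (Finset.Icc 1 N)).filter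
    (fun p => p.1 ≠ p.2 ∧ supNint (fun i => x p.1 i - x p.2 i) ≤ r)).card

/-- Discrepancy of the first `N` points of `x` in `[0,1)^d`: supremum over all
axis-parallel boxes `[a,b) ⊆ [0,1)^d` of `|#{1 ≤ n ≤ N : x_n ∈ [a,b)}/N - vol [a,b)|`. -/
noncomputable def discrepancy (d N : ℕ) (x : ℕ → Fin d → ℝ) : ℝ :=
  sSup {v : ℝ | ∃ a b : Fin d → ℝ, (∀ i, 0 ≤ a i ∧ a i ≤ b i ∧ b i ≤ 1) ∧
    v = |(((Finset.Icc 1 N).filter (fun n => ∀ i, a i ≤ x n i ∧ x n i < b i)).card : ℝ) / N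
      - ∏ i, (b i - a i)|}

open Finset Filter Topology

/-!
For `r < 1/2` the closed torus ball of radius `r` around `c ∈ [0,1)^d` meets `[0,1)^d` in a union
of `3^d` boxes: in each coordinate the arc `[c_i - r, c_i + r]` wraps into its translates by
`-1, 0, 1` cut down to `[0,1)`, of total length `2r`. The half-open boxes built on
`[c_i - r, c_i + r)` are disjoint and lie in the ball, and those built on `[c_i - r, c_i + r')`,
`r' > r`, cover it. The discrepancy bound on each box therefore counts the neighbours of every
point up to an error `3^d N D_N`, and summing over the `N` centres gives
`N² (2r)^d - 3^d N² D_N - N ≤ pairCount ≤ N² (r + r')^d + 3^d N² D_N`.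
With `r = s / N^α` and `r' = r + r/N` the main term is `(2s)^d N^(1+ε)`, and the error terms
are small against it because `N^(1-ε) D_N → 0` and `ε > 0`.
-/

lemma nint_le_abs_sub (y : ℝ) (k : ℤ) : nint y ≤ |y - k| :=
  ciInf_le ⟨0, by rintro _ ⟨k, rfl⟩; exact abs_nonneg _⟩ k

lemma nint_eq_abs_sub_round (y : ℝ) : nint y = |y - round y| :=
  le_antisymm (nint_le_abs_sub y _) (le_ciInf (round_le y))

lemma nint_le_supNint {d : ℕ} (y : Fin d → ℝ) (i : Fin d) : nint (y i) ≤ supNint y :=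
  le_ciSup (f := fun i => nint (y i)) (Set.finite_range _).bddAbove i

lemma supNint_le_iff {d : ℕ} {y : Fin d → ℝ} {r : ℝ} (hr : 0 ≤ r) :
    supNint y ≤ r ↔ ∀ i, nint (y i) ≤ r :=
  ⟨fun h i => (nint_le_supNint y i).trans h, fun h => Real.iSup_le h hr⟩

lemma supNint_sub_self_le {d : ℕ} (c : Fin d → ℝ) {r : ℝ} (hr : 0 ≤ r) :
    supNint (fun i => c i - c i) ≤ r :=
  (supNint_le_iff hr).2 fun i => by simpa [nint_eq_abs_sub_round] using hr

noncomputable def unitClamp (y : ℝ) : ℝ := max 0 (min y 1)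

lemma unitClamp_nonneg (y : ℝ) : 0 ≤ unitClamp y := le_max_left _ _

lemma unitClamp_le_one (y : ℝ) : unitClamp y ≤ 1 := max_le zero_le_one (min_le_right _ _)

lemma unitClamp_mono : Monotone unitClamp := fun _ _ h => max_le_max le_rfl (min_le_min_right _ h)

lemma unitClamp_le_iff {y t : ℝ} (ht : t ∈ Set.Ico (0 : ℝ) 1) :
    unitClamp y ≤ t ↔ y ≤ t := by
  simp [unitClamp, ht.1, ht.2.not_ge]

lemma lt_unitClamp_iff {y t : ℝ} (ht : t ∈ Set.Ico (0 : ℝ) 1) :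
    t < unitClamp y ↔ t < y := by
  simp [unitClamp, ht.1.not_gt, ht.2]

def unitShift (j : Fin 3) : ℝ := (j : ℝ) - 1

lemma unitClamp_of_nonpos {y : ℝ} (h : y ≤ 0) : unitClamp y = 0 := by
  simp [unitClamp, min_le_of_left_le h]

lemma unitClamp_of_mem {y : ℝ} (h0 : 0 ≤ y) (h1 : y ≤ 1) : unitClamp y = y := by
  simp [unitClamp, h0, h1]

lemma unitClamp_of_one_le {y : ℝ} (h : 1 ≤ y) : unitClamp y = 1 := by
  simp [unitClamp, h]

lemma sum_unitClamp_add_unitShift {y : ℝ} (h1 : -1 ≤ y) (h2 : y ≤ 2) :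
    ∑ j, unitClamp (y + unitShift j) = y + 1 := by
  simp only [Fin.sum_univ_three, unitShift, Fin.val_zero, Fin.val_one, Fin.val_two]
  push_cast
  rcases le_total y 0 with h | h
  · rw [unitClamp_of_nonpos (by linarith), unitClamp_of_nonpos (by linarith),
      unitClamp_of_mem (by linarith) (by linarith)]
    ring
  rcases le_total y 1 with h' | h'
  · rw [unitClamp_of_nonpos (by linarith), unitClamp_of_mem (by linarith) (by linarith),
      unitClamp_of_one_le (by linarith)]
    ring
  · rw [unitClamp_of_mem (by linarith) (by linarith), unitClamp_of_one_le (by linarith),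
      unitClamp_of_one_le (by linarith)]
    ring

lemma card_unitShift_le_one {u v t : ℝ} (huv : v - u ≤ 1) :
    #{j | u ≤ t - unitShift j ∧ t - unitShift j < v} ≤ 1 := by
  refine card_le_one.2 fun j hj k hk => ?_
  simp only [mem_filter, mem_univ, true_and] at hj hk
  unfold unitShift at hj hk
  have hjk : (j : ℕ) < k + 1 := by
    exact_mod_cast (by linarith : ((j : ℕ) : ℝ) < (k : ℕ) + 1)
  have hkj : (k : ℕ) < j + 1 := by
    exact_mod_cast (by linarith : ((k : ℕ) : ℝ) < (j : ℕ) + 1)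
  exact Fin.ext (by omega)

/-- The intervals `[arcEnd c ρ j, arcEnd c ρ' j)`, `j : Fin 3`, are the translates of
`[c + ρ, c + ρ')` by `-1, 0, 1` cut down to `[0, 1)`: together they form the trace of that
interval, taken mod `1`, on `[0, 1)`. -/
noncomputable def arcEnd (c ρ : ℝ) (j : Fin 3) : ℝ := unitClamp (c + ρ + unitShift j)

lemma nint_sub_le_of_abs_sub_unitShift_le {c t r : ℝ} {j : Fin 3}
    (h : |t - unitShift j - c| ≤ r) : nint (c - t) ≤ r := by
  refine (nint_le_abs_sub _ (1 - j)).trans (le_of_eq_of_le ?_ h)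
  rw [← abs_neg]
  push_cast [unitShift]
  ring_nf

lemma exists_abs_sub_unitShift_le {c t r : ℝ} (hc : c ∈ Set.Ico (0 : ℝ) 1)
    (ht : t ∈ Set.Ico (0 : ℝ) 1) (hr : r < 1 / 2) (h : nint (c - t) ≤ r) :
    ∃ j : Fin 3, |t - unitShift j - c| ≤ r := by
  obtain ⟨k, hk⟩ : ∃ k : ℤ, |c - t - k| ≤ r :=
    ⟨_, (nint_eq_abs_sub_round _).symm.trans_le h⟩
  obtain ⟨hk1, hk2⟩ := abs_le.1 hk
  have hlo : -2 < k := by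
    exact_mod_cast (by push_cast; linarith [hc.1, ht.2] : ((-2 : ℤ) : ℝ) < k)
  have hhi : k < 2 := by
    exact_mod_cast (by push_cast; linarith [hc.2, ht.1] : (k : ℝ) < (2 : ℤ))
  have hk' : |t - -(k : ℝ) - c| ≤ r := by rw [← abs_neg]; convert hk using 2; ring
  interval_cases k
  · exact ⟨2, by convert hk' using 4; norm_num [unitShift]⟩
  · exact ⟨1, by convert hk' using 4; norm_num [unitShift]⟩
  · exact ⟨0, by convert hk' using 4; norm_num [unitShift]⟩

lemma mem_arc_iff {c ρ ρ' t : ℝ} {j : Fin 3} (ht : t ∈ Set.Ico (0 : ℝ) 1) :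
    arcEnd c ρ j ≤ t ∧ t < arcEnd c ρ' j ↔
      c + ρ ≤ t - unitShift j ∧ t - unitShift j < c + ρ' := by
  rw [arcEnd, arcEnd, unitClamp_le_iff ht, lt_unitClamp_iff ht, le_sub_iff_add_le,
    sub_lt_iff_lt_add]

lemma card_arc_le_one {c r t : ℝ} (ht : t ∈ Set.Ico (0 : ℝ) 1) (hr : r ≤ 1 / 2) :
    #{j | arcEnd c (-r) j ≤ t ∧ t < arcEnd c r j} ≤ 1 := by
  simp_rw [mem_arc_iff ht]
  exact card_unitShift_le_one (by linarith)

lemma nint_sub_le_of_mem_arc {c r t : ℝ} {j : Fin 3} (ht : t ∈ Set.Ico (0 : ℝ) 1)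
    (hj : arcEnd c (-r) j ≤ t ∧ t < arcEnd c r j) : nint (c - t) ≤ r := by
  rw [mem_arc_iff ht] at hj
  exact nint_sub_le_of_abs_sub_unitShift_le (abs_le.2 ⟨by linarith [hj.1], by linarith [hj.2]⟩)

lemma exists_mem_arc_of_nint_sub_le {c r r' t : ℝ} (hc : c ∈ Set.Ico (0 : ℝ) 1)
    (ht : t ∈ Set.Ico (0 : ℝ) 1) (hr : r < 1 / 2) (hrr' : r < r') (h : nint (c - t) ≤ r) :
    ∃ j, arcEnd c (-r) j ≤ t ∧ t < arcEnd c r' j := by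
  obtain ⟨j, hj⟩ := exists_abs_sub_unitShift_le hc ht hr h
  obtain ⟨hj1, hj2⟩ := abs_le.1 hj
  exact ⟨j, (mem_arc_iff ht).2 ⟨by linarith, by linarith⟩⟩

lemma arcEnd_mem_Icc (c ρ : ℝ) (j : Fin 3) : arcEnd c ρ j ∈ Set.Icc (0 : ℝ) 1 :=
  ⟨unitClamp_nonneg _, unitClamp_le_one _⟩

lemma arcEnd_mono {c ρ ρ' : ℝ} (h : ρ ≤ ρ') (j : Fin 3) :
    arcEnd c ρ j ≤ arcEnd c ρ' j :=
  unitClamp_mono (by linarith)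

lemma sum_arcEnd_sub {c ρ ρ' : ℝ} (hc : c ∈ Set.Ico (0 : ℝ) 1) (hρ : -1 ≤ ρ)
    (hρρ' : ρ ≤ ρ') (hρ' : ρ' ≤ 1) :
    ∑ j, (arcEnd c ρ' j - arcEnd c ρ j) = ρ' - ρ := by
  simp only [arcEnd, sum_sub_distrib]
  rw [sum_unitClamp_add_unitShift (by linarith [hc.1]) (by linarith [hc.2]),
    sum_unitClamp_add_unitShift (by linarith [hc.1]) (by linarith [hc.2])]
  ring

section Boxes

variable {d : ℕ} (N : ℕ) (x : ℕ → Fin d → ℝ)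

noncomputable def boxCount (a b : Fin d → ℝ) : ℕ :=
  #{n ∈ Icc 1 N | ∀ i, a i ≤ x n i ∧ x n i < b i}

lemma boxCount_le (a b : Fin d → ℝ) : boxCount N x a b ≤ N :=
  (card_filter_le _ _).trans (by simp)

lemma abs_boxCount_div_sub_le_discrepancy {a b : Fin d → ℝ}
    (hab : ∀ i, 0 ≤ a i ∧ a i ≤ b i ∧ b i ≤ 1) :
    |(boxCount N x a b : ℝ) / N - ∏ i, (b i - a i)| ≤ discrepancy d N x := by
  refine le_csSup ⟨1, ?_⟩ ⟨a, b, hab, rfl⟩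
  rintro _ ⟨a, b, hab, rfl⟩
  change |(boxCount N x a b : ℝ) / N - _| ≤ 1
  have hcount : (boxCount N x a b : ℝ) / N ≤ 1 :=
    div_le_one_of_le₀ (by exact_mod_cast boxCount_le N x a b) (Nat.cast_nonneg _)
  have hvol : ∏ i, (b i - a i) ≤ 1 :=
    prod_le_one (fun i _ => by linarith [hab i]) fun i _ => by linarith [hab i]
  have hvol' : 0 ≤ ∏ i, (b i - a i) := prod_nonneg fun i _ => by linarith [hab i]
  have hcount' : (0 : ℝ) ≤ (boxCount N x a b : ℝ) / N := by positivity
  exact abs_sub_le_iff.2 ⟨by linarith, by linarith⟩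

lemma abs_boxCount_sub_le {a b : Fin d → ℝ}
    (hab : ∀ i, 0 ≤ a i ∧ a i ≤ b i ∧ b i ≤ 1) :
    |(boxCount N x a b : ℝ) - N * ∏ i, (b i - a i)| ≤ N * discrepancy d N x := by
  rcases N.eq_zero_or_pos with rfl | hN
  · simp [boxCount]
  have hN' : (0 : ℝ) < N := by exact_mod_cast hN
  have hsplit : (boxCount N x a b : ℝ) - N * ∏ i, (b i - a i) =
      N * ((boxCount N x a b : ℝ) / N - ∏ i, (b i - a i)) := by field_simp
  rw [hsplit, abs_mul, abs_of_pos hN']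
  exact mul_le_mul_of_nonneg_left (abs_boxCount_div_sub_le_discrepancy N x hab) hN'.le

variable {ι : Type*} [Fintype ι]

lemma sum_boxCount_eq_sum_prod_card (a b : Fin d → ι → ℝ) :
    ∑ σ : Fin d → ι, boxCount N x (fun i => a i (σ i)) (fun i => b i (σ i)) =
      ∑ n ∈ Icc 1 N, ∏ i, #{j | a i j ≤ x n i ∧ x n i < b i j} := by
  simp only [boxCount, card_filter]
  rw [sum_comm]
  refine sum_congr rfl fun n _ => ?_
  rw [Fintype.prod_sum]
  exact sum_congr rfl fun σ _ => by convert Fintype.prod_boole.symm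

lemma abs_sum_boxCount_sub_le (a b : Fin d → ι → ℝ)
    (hab : ∀ i j, 0 ≤ a i j ∧ a i j ≤ b i j ∧ b i j ≤ 1) :
    |∑ σ : Fin d → ι, (boxCount N x (fun i => a i (σ i)) (fun i => b i (σ i)) : ℝ) -
        N * ∏ i, ∑ j, (b i j - a i j)| ≤ Fintype.card ι ^ d * (N * discrepancy d N x) := by
  rw [Fintype.prod_sum, mul_sum, ← sum_sub_distrib]
  refine (abs_sum_le_sum_abs _ _).trans ?_
  refine (sum_le_sum fun σ _ => abs_boxCount_sub_le N x fun i => hab i (σ i)).trans ?_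
  simp

end Boxes

section Balls

variable {d : ℕ} (N : ℕ)

noncomputable def ballCount (x : ℕ → Fin d → ℝ) (l : ℕ) (r : ℝ) : ℕ :=
  #{m ∈ Icc 1 N | supNint (fun i => x l i - x m i) ≤ r}

variable {x : ℕ → Fin d → ℝ}

lemma sum_boxCount_arc_le_ballCount (hx : ∀ n i, x n i ∈ Set.Ico (0 : ℝ) 1) (l : ℕ)
    {r : ℝ} (hr0 : 0 ≤ r) (hr : r ≤ 1 / 2) :
    ∑ σ : Fin d → Fin 3, boxCount N x (fun i => arcEnd (x l i) (-r) (σ i))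
      (fun i => arcEnd (x l i) r (σ i)) ≤ ballCount N x l r := by
  rw [sum_boxCount_eq_sum_prod_card, ballCount, card_filter]
  refine sum_le_sum fun m _ => ?_
  split_ifs with hball
  · exact prod_le_one (fun _ _ => Nat.zero_le _) fun i _ => card_arc_le_one (hx m i) hr
  · obtain ⟨i, hi⟩ : ∃ i, ¬ nint (x l i - x m i) ≤ r := by
      simpa [supNint_le_iff hr0] using hball
    refine (prod_eq_zero (mem_univ i) (card_eq_zero.2 (filter_eq_empty_iff.2 fun j _ hj => ?_))).le
    exact hi (nint_sub_le_of_mem_arc (hx m i) hj)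

lemma ballCount_le_sum_boxCount_arc (hx : ∀ n i, x n i ∈ Set.Ico (0 : ℝ) 1) (l : ℕ)
    {r r' : ℝ} (hr : r < 1 / 2) (hrr' : r < r') :
    ballCount N x l r ≤
      ∑ σ : Fin d → Fin 3, boxCount N x (fun i => arcEnd (x l i) (-r) (σ i))
        (fun i => arcEnd (x l i) r' (σ i)) := by
  rw [sum_boxCount_eq_sum_prod_card, ballCount, card_filter]
  refine sum_le_sum fun m _ => ?_
  split_ifs with hball
  · refine Nat.one_le_iff_ne_zero.2 (prod_ne_zero_iff.2 fun i _ => ?_)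
    obtain ⟨j, hj⟩ := exists_mem_arc_of_nint_sub_le (hx l i) (hx m i) hr hrr'
      ((nint_le_supNint _ i).trans hball)
    exact (card_pos.2 ⟨j, mem_filter.2 ⟨mem_univ j, hj⟩⟩).ne'
  · exact Nat.zero_le _

lemma abs_sum_boxCount_arc_sub_le (hx : ∀ n i, x n i ∈ Set.Ico (0 : ℝ) 1) (l : ℕ)
    {r r' : ℝ} (hr1 : r ≤ 1) (hrr' : -r ≤ r') (hr' : r' ≤ 1) :
    |∑ σ : Fin d → Fin 3, (boxCount N x (fun i => arcEnd (x l i) (-r) (σ i))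
      (fun i => arcEnd (x l i) r' (σ i)) : ℝ) - N * (r + r') ^ d| ≤
      3 ^ d * (N * discrepancy d N x) := by
  have hvol : ∏ i, ∑ j, (arcEnd (x l i) r' j - arcEnd (x l i) (-r) j) = (r + r') ^ d := by
    simp [sum_arcEnd_sub (hx l _) (by linarith) hrr' hr', sub_neg_eq_add, add_comm]
  have := abs_sum_boxCount_sub_le N x (fun i j => arcEnd (x l i) (-r) j)
    (fun i j => arcEnd (x l i) r' j) fun i j =>
      ⟨(arcEnd_mem_Icc _ _ _).1, arcEnd_mono hrr' j, (arcEnd_mem_Icc _ _ _).2⟩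
  rwa [hvol, Fintype.card_fin] at this

lemma le_ballCount (hx : ∀ n i, x n i ∈ Set.Ico (0 : ℝ) 1) (l : ℕ) {r : ℝ} (hr0 : 0 ≤ r)
    (hr : r ≤ 1 / 2) :
    N * (2 * r) ^ d - 3 ^ d * (N * discrepancy d N x) ≤ ballCount N x l r := by
  have h := abs_sum_boxCount_arc_sub_le N hx l (by linarith) (by linarith) (by linarith)
  have h' : (∑ σ : Fin d → Fin 3, (boxCount N x (fun i => arcEnd (x l i) (-r) (σ i))
      (fun i => arcEnd (x l i) r (σ i)) : ℝ)) ≤ ballCount N x l r := by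
    exact_mod_cast sum_boxCount_arc_le_ballCount N hx l hr0 hr
  rw [two_mul]
  linarith [(abs_le.1 h).1]

lemma ballCount_le (hx : ∀ n i, x n i ∈ Set.Ico (0 : ℝ) 1) (l : ℕ) {r r' : ℝ}
    (hr0 : 0 ≤ r) (hr : r < 1 / 2) (hrr' : r < r') (hr' : r' ≤ 1) :
    ballCount N x l r ≤ N * (r + r') ^ d + 3 ^ d * (N * discrepancy d N x) := by
  have h := abs_sum_boxCount_arc_sub_le N hx l (r := r) (by linarith) (by linarith) hr'
  have h' : (ballCount N x l r : ℝ) ≤ ∑ σ : Fin d → Fin 3, (boxCount N x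
      (fun i => arcEnd (x l i) (-r) (σ i)) (fun i => arcEnd (x l i) r' (σ i)) : ℝ) := by
    exact_mod_cast ballCount_le_sum_boxCount_arc N hx l hr hrr'
  linarith [(abs_le.1 h).2]

end Balls

lemma pairCount_add_eq_sum_ballCount {d : ℕ} (x : ℕ → Fin d → ℝ) (N : ℕ) {r : ℝ}
    (hr : 0 ≤ r) :
    pairCount d x N r + N = ∑ l ∈ Icc 1 N, ballCount N x l r := by
  have hfiber : ∀ l ∈ Icc 1 N,
      #{m ∈ Icc 1 N | l ≠ m ∧ supNint (fun i => x l i - x m i) ≤ r} + 1 =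
        ballCount N x l r := by
    intro l hl
    have hself : l ∈ ({m ∈ Icc 1 N | supNint (fun i => x l i - x m i) ≤ r} : Finset ℕ) :=
      mem_filter.2 ⟨hl, supNint_sub_self_le (x l) hr⟩
    rw [ballCount, ← card_erase_add_one hself]
    congr 2
    ext m
    simp only [mem_filter, mem_erase]
    tauto
  rw [pairCount, card_filter, sum_product, ← sum_congr rfl hfiber, sum_add_distrib]
  simp only [card_filter, sum_const, Nat.card_Icc, smul_eq_mul, mul_one, Nat.add_sub_cancel]

section PairCount

variable {d : ℕ} {x : ℕ → Fin d → ℝ}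

lemma le_pairCount (N : ℕ) (hx : ∀ n i, x n i ∈ Set.Ico (0 : ℝ) 1) {r : ℝ} (hr0 : 0 ≤ r)
    (hr : r ≤ 1 / 2) :
    (N : ℝ) ^ 2 * (2 * r) ^ d - 3 ^ d * (N ^ 2 * discrepancy d N x) - N ≤
      pairCount d x N r := by
  have hsum : (pairCount d x N r : ℝ) + N = ∑ l ∈ Icc 1 N, (ballCount N x l r : ℝ) := by
    exact_mod_cast pairCount_add_eq_sum_ballCount x N hr0
  have hball := sum_le_sum fun l (_ : l ∈ Icc 1 N) => le_ballCount N hx l hr0 hr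
  rw [sum_const, Nat.card_Icc, Nat.add_sub_cancel, nsmul_eq_mul] at hball
  linarith

lemma pairCount_le (N : ℕ) (hx : ∀ n i, x n i ∈ Set.Ico (0 : ℝ) 1) {r r' : ℝ}
    (hr0 : 0 ≤ r) (hr : r < 1 / 2) (hrr' : r < r') (hr' : r' ≤ 1) :
    (pairCount d x N r : ℝ) ≤ N ^ 2 * (r + r') ^ d + 3 ^ d * (N ^ 2 * discrepancy d N x) := by
  have hsum : (pairCount d x N r : ℝ) + N = ∑ l ∈ Icc 1 N, (ballCount N x l r : ℝ) := by
    exact_mod_cast pairCount_add_eq_sum_ballCount x N hr0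
  have hball := sum_le_sum fun l (_ : l ∈ Icc 1 N) => ballCount_le N hx l hr0 hr hrr' hr'
  rw [sum_const, Nat.card_Icc, Nat.add_sub_cancel, nsmul_eq_mul] at hball
  have hN : (0 : ℝ) ≤ N := Nat.cast_nonneg N
  linarith

lemma pairCount_div_bounds (hx : ∀ n i, x n i ∈ Set.Ico (0 : ℝ) 1) {N : ℕ} (hN : 0 < N)
    {r : ℝ} (hr0 : 0 < r) (hr : r < 1 / 2) :
    1 - 3 ^ d * discrepancy d N x / (2 * r) ^ d - 1 / (N * (2 * r) ^ d) ≤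
        pairCount d x N r / (N ^ 2 * (2 * r) ^ d) ∧
      pairCount d x N r / (N ^ 2 * (2 * r) ^ d) ≤
        (1 + 1 / (2 * N)) ^ d + 3 ^ d * discrepancy d N x / (2 * r) ^ d := by
  have hN' : (0 : ℝ) < N := by exact_mod_cast hN
  have hW : (0 : ℝ) < (2 * r) ^ d := by positivity
  constructor
  · rw [le_div_iff₀ (by positivity)]
    have h := le_pairCount N hx hr0.le hr.le
    have hexpand : (1 - 3 ^ d * discrepancy d N x / (2 * r) ^ d - 1 / (N * (2 * r) ^ d)) *
        (N ^ 2 * (2 * r) ^ d) = N ^ 2 * (2 * r) ^ d - 3 ^ d * (N ^ 2 * discrepancy d N x) - N := by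
      field_simp
    linarith
  · rw [div_le_iff₀ (by positivity)]
    have h := pairCount_le N hx (r' := r + r / N) hr0.le hr (by simp; positivity)
      (by linarith [div_le_self hr0.le (Nat.one_le_cast.2 hN)])
    have hradius : r + (r + r / N) = 2 * r * (1 + 1 / (2 * N)) := by field_simp; ring
    rw [hradius, mul_pow] at h
    have hexpand : ((1 + 1 / (2 * N)) ^ d + 3 ^ d * discrepancy d N x / (2 * r) ^ d) *
        (N ^ 2 * (2 * r) ^ d) = N ^ 2 * ((2 * r) ^ d * (1 + 1 / (2 * N)) ^ d) +
          3 ^ d * (N ^ 2 * discrepancy d N x) := by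
      field_simp
    linarith

end PairCount

theorem tendsto_pairCount_div {d : ℕ} {x : ℕ → Fin d → ℝ}
    (hx : ∀ n i, x n i ∈ Set.Ico (0 : ℝ) 1) {r : ℕ → ℝ}
    (hr_pos : ∀ᶠ N in atTop, 0 < r N)
    (hr : Tendsto r atTop (𝓝 0))
    (hD : Tendsto (fun N => discrepancy d N x / r N ^ d) atTop (𝓝 0))
    (hNr : Tendsto (fun N : ℕ => N * r N ^ d) atTop atTop) :
    Tendsto (fun N : ℕ => (pairCount d x N (r N) : ℝ) / (N ^ 2 * (2 * r N) ^ d)) atTop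
      (𝓝 1) := by
  have hE : Tendsto (fun N => 3 ^ d * discrepancy d N x / (2 * r N) ^ d) atTop (𝓝 0) := by
    have h := (hD.div_const (2 ^ d)).const_mul (3 ^ d)
    rw [zero_div, mul_zero] at h
    exact h.congr fun N => by ring
  have hF : Tendsto (fun N : ℕ => 1 / (N * (2 * r N) ^ d)) atTop (𝓝 0) := by
    have h := hNr.inv_tendsto_atTop.div_const (2 ^ d)
    rw [zero_div] at h
    exact h.congr fun N => by simp only [Pi.inv_apply]; ring
  have hG : Tendsto (fun N : ℕ => (1 + 1 / (2 * (N : ℝ))) ^ d) atTop (𝓝 1) := by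
    have h : Tendsto (fun N : ℕ => 1 + 1 / (2 * (N : ℝ))) atTop (𝓝 (1 + 0)) :=
      tendsto_const_nhds.add (tendsto_const_nhds.div_atTop
        (tendsto_natCast_atTop_atTop.const_mul_atTop two_pos))
    simpa using h.pow d
  have hbounds : ∀ᶠ N : ℕ in atTop,
      1 - 3 ^ d * discrepancy d N x / (2 * r N) ^ d - 1 / (N * (2 * r N) ^ d) ≤
          pairCount d x N (r N) / (N ^ 2 * (2 * r N) ^ d) ∧
        pairCount d x N (r N) / (N ^ 2 * (2 * r N) ^ d) ≤
          (1 + 1 / (2 * N)) ^ d + 3 ^ d * discrepancy d N x / (2 * r N) ^ d := by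
    filter_upwards [hr_pos, hr.eventually (gt_mem_nhds one_half_pos), eventually_gt_atTop 0]
      with N hrN hrN' hN
    exact pairCount_div_bounds hx hN hrN hrN'
  refine tendsto_of_tendsto_of_tendsto_of_le_of_le' ?_ ?_ (hbounds.mono fun _ h => h.1)
    (hbounds.mono fun _ h => h.2)
  · simpa using (hE.const_sub 1).sub hF
  · simpa using hG.add hE

lemma div_rpow_div_pow {s y a : ℝ} {d : ℕ} (hd : d ≠ 0) (hy : 0 < y) :
    (s / y ^ (a / d)) ^ d = s ^ d / y ^ a := by
  rw [div_pow, ← Real.rpow_natCast (y ^ (a / d)), ← Real.rpow_mul hy.le,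
    div_mul_cancel₀ a (Nat.cast_ne_zero.2 hd)]

lemma tendsto_natCast_mul_div_rpow_pow {s ε : ℝ} {d : ℕ} (hs : 0 < s) (hε : 0 < ε)
    (hd : d ≠ 0) :
    Tendsto (fun N : ℕ => N * (s / (N : ℝ) ^ ((1 - ε) / d)) ^ d) atTop atTop := by
  refine (((tendsto_rpow_atTop hε).comp tendsto_natCast_atTop_atTop).const_mul_atTop
    (pow_pos hs d)).congr' ?_
  filter_upwards [eventually_gt_atTop 0] with N hN
  have hN' : (0 : ℝ) < N := Nat.cast_pos.2 hN
  rw [Function.comp_apply, div_rpow_div_pow hd hN', Real.rpow_sub hN', Real.rpow_one]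
  field_simp

theorem stmt1_general (d : ℕ) (ε : ℝ) (hε : 0 < ε) (hεd : ε < 1 / d)
    (x : ℕ → Fin d → ℝ) (hx : ∀ n, ∀ i, x n i ∈ Set.Ico (0 : ℝ) 1)
    (hD : Filter.Tendsto (fun N : ℕ => (N : ℝ) ^ (1 - ε) * discrepancy d N x)
      Filter.atTop (nhds 0)) :
    ∀ s : ℝ, 0 < s → Filter.Tendsto
      (fun N : ℕ => (pairCount d x N (s / (N : ℝ) ^ ((1 - ε) / d)) : ℝ) /
        ((N : ℝ) ^ 2 * (2 * s / (N : ℝ) ^ ((1 - ε) / d)) ^ d)) Filter.atTop (nhds 1) := by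
  intro s hs
  have hd : d ≠ 0 := by rintro rfl; norm_num at hεd; linarith
  have hε1 : ε < 1 := hεd.trans_le
    (div_le_one_of_le₀ (Nat.one_le_cast.2 (Nat.one_le_iff_ne_zero.2 hd)) (Nat.cast_nonneg _))
  have hα : 0 < (1 - ε) / d := div_pos (sub_pos.2 hε1) (Nat.cast_pos.2 (Nat.pos_of_ne_zero hd))
  have hpos : ∀ᶠ N : ℕ in atTop, (0 : ℝ) < N :=
    (eventually_gt_atTop 0).mono fun N hN => Nat.cast_pos.2 hN
  have hlim := tendsto_pairCount_div hx (r := fun N : ℕ => s / (N : ℝ) ^ ((1 - ε) / d))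
    (hpos.mono fun N hN => by positivity)
    (tendsto_const_nhds.div_atTop ((tendsto_rpow_atTop hα).comp tendsto_natCast_atTop_atTop))
    ?_ ?_
  · simpa only [mul_div_assoc] using hlim
  · have h := hD.div_const (s ^ d)
    rw [zero_div] at h
    refine h.congr' ?_
    filter_upwards [hpos] with N hN
    rw [div_rpow_div_pow hd hN]
    field_simp
  · exact tendsto_natCast_mul_div_rpow_pow hs hε hd

theorem stmt1 (d : ℕ) (hd : 1 ≤ d) (ε : ℝ) (hε : 0 < ε) (hεd : ε < 1 / d)
    (x : ℕ → Fin d → ℝ) (hx : ∀ n, ∀ i, x n i ∈ Set.Ico (0 : ℝ) 1)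
    (hD : Filter.Tendsto (fun N : ℕ => (N : ℝ) ^ (1 - ε) * discrepancy d N x)
      Filter.atTop (nhds 0)) :
    ∀ s : ℝ, 0 < s → Filter.Tendsto
      (fun N : ℕ => (pairCount d x N (s / (N : ℝ) ^ ((1 - ε) / d)) : ℝ) /
        ((N : ℝ) ^ 2 * (2 * s / (N : ℝ) ^ ((1 - ε) / d)) ^ d)) Filter.atTop (nhds 1) :=
  stmt1_general d ε hε hεd x hx hD
end

section
/- Let N, K ∈ ℕ with N ≥ 1, let 0 ≤ x₁* ≤ x₂* ≤ … ≤ x_N* < 1 be real numbers, let L₁ < L₂ < … < L_K be positive reals and N₁, …, N_K positive integers with Σ_{k=1}^K N_k L_k = 1. Let R > −1 with L_K = (R+2)/N, and assume x₁* ≤ L_K. Suppose there are reals n_k(j), for k = 1,…,K and j = 1,…,N, such that for all j: x_j* = x₁* + Σ_{k=1}^K n_k(j) L_k, and for all j, k: (N_k/N)·j − ε ≤ n_k(j) ≤ (N_k/N)·j + ε, where ε ≥ 0. Then the star-discrepancy of the point set x₁*, …, x_N* satisfies D_N*(x₁*,…,x_N*) ≤ (R+3)/N + ε · Σ_{k=1}^K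 L_k. -/
open scoped Classical

/-- Star-discrepancy of a finite point set `x₁, …, x_N` in `[0,1)`. -/
noncomputable def starDiscrepancyFin (N : ℕ) (x : Fin N → ℝ) : ℝ :=
  sSup {v : ℝ | ∃ b : ℝ, 0 < b ∧ b ≤ 1 ∧
    v = |((Finset.univ.filter (fun i : Fin N => 0 ≤ x i ∧ x i < b)).card : ℝ) / N - b|}

theorem stmt9 (N K : ℕ) (hN : 1 ≤ N) (hK : 1 ≤ K)
    (x : Fin N → ℝ) (hx : ∀ i, x i ∈ Set.Ico (0 : ℝ) 1) (hmono : Monotone x)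
    (L : Fin K → ℝ) (hLpos : ∀ k, 0 < L k) (hLmono : StrictMono L)
    (Nk : Fin K → ℕ) (hNk : ∀ k, 0 < Nk k)
    (hsum : ∑ k, (Nk k : ℝ) * L k = 1)
    (R : ℝ) (hR : -1 < R)
    (hLK : L ⟨K - 1, by omega⟩ = (R + 2) / N)
    (hx1 : x ⟨0, by omega⟩ ≤ L ⟨K - 1, by omega⟩)
    (ε : ℝ) (hε : 0 ≤ ε)
    (n : Fin K → Fin N → ℝ)
    (hrep : ∀ j : Fin N, x j = x ⟨0, by omega⟩ + ∑ k, n k j * L k)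
    (hbound : ∀ (j : Fin N) (k : Fin K),
      (Nk k : ℝ) / N * ((j : ℕ) + 1) - ε ≤ n k j ∧
        n k j ≤ (Nk k : ℝ) / N * ((j : ℕ) + 1) + ε) :
    starDiscrepancyFin N x ≤ (R + 3) / N + ε * ∑ k, L k := by
  have hN0 : (0:ℝ) < N := by exact_mod_cast hN
  set E := ε * ∑ k, L k with hE
  have hLsum : 0 ≤ ∑ k, L k := Finset.sum_nonneg fun k _ => (hLpos k).le
  have hE0 : 0 ≤ E := mul_nonneg hε hLsum
  have hB0 : 0 ≤ (R + 3) / N + E := by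
    have h1 : 0 ≤ (R+3)/N := div_nonneg (by linarith) hN0.le
    linarith
  have hx0 : 0 ≤ x ⟨0, by omega⟩ := (hx _).1
  have hsumlem : ∀ j : Fin N, (((j:ℕ):ℝ)+1)/N - E ≤ ∑ k, n k j * L k ∧
      ∑ k, n k j * L k ≤ (((j:ℕ):ℝ)+1)/N + E := by
    intro j
    have hlow : ∀ k ∈ Finset.univ, ((Nk k:ℝ)/N * (((j:ℕ):ℝ)+1) - ε) * L k ≤ n k j * L k :=
      fun k _ => mul_le_mul_of_nonneg_right (hbound j k).1 (hLpos k).le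
    have hhigh : ∀ k ∈ Finset.univ, n k j * L k ≤ ((Nk k:ℝ)/N * (((j:ℕ):ℝ)+1) + ε) * L k :=
      fun k _ => mul_le_mul_of_nonneg_right (hbound j k).2 (hLpos k).le
    have e1 : ∑ k, ((Nk k:ℝ)/N * (((j:ℕ):ℝ)+1) - ε) * L k
        = (((j:ℕ):ℝ)+1)/N * ∑ k, (Nk k:ℝ) * L k - ε * ∑ k, L k := by
      rw [Finset.mul_sum, Finset.mul_sum, ← Finset.sum_sub_distrib]
      exact Finset.sum_congr rfl fun k _ => by ring
    have e2 : ∑ k, ((Nk k:ℝ)/N * (((j:ℕ):ℝ)+1) + ε) * L k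
        = (((j:ℕ):ℝ)+1)/N * ∑ k, (Nk k:ℝ) * L k + ε * ∑ k, L k := by
      rw [Finset.mul_sum, Finset.mul_sum, ← Finset.sum_add_distrib]
      exact Finset.sum_congr rfl fun k _ => by ring
    constructor
    · calc (((j:ℕ):ℝ)+1)/N - E = ∑ k, ((Nk k:ℝ)/N * (((j:ℕ):ℝ)+1) - ε) * L k := by
            rw [e1, hsum, mul_one]
        _ ≤ _ := Finset.sum_le_sum hlow
    · calc ∑ k, n k j * L k ≤ ∑ k, ((Nk k:ℝ)/N * (((j:ℕ):ℝ)+1) + ε) * L k :=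
            Finset.sum_le_sum hhigh
        _ = _ := by rw [e2, hsum, mul_one]
  have low : ∀ j : Fin N, (((j:ℕ):ℝ)+1)/N - E ≤ x j := by
    intro j
    have := (hsumlem j).1
    rw [hrep j]; linarith
  have high : ∀ j : Fin N, x j ≤ (((j:ℕ):ℝ)+1)/N + (R+2)/N + E := by
    intro j
    have h1 := (hsumlem j).2
    have h2 : x ⟨0, by omega⟩ ≤ (R+2)/N := hLK ▸ hx1
    rw [hrep j]; linarith
  apply Real.sSup_le _ hB0
  rintro v ⟨b, hb0, hb1, rfl⟩
  have hfil : (Finset.univ.filter (fun i : Fin N => 0 ≤ x i ∧ x i < b))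
      = Finset.univ.filter (fun i : Fin N => x i < b) :=
    Finset.filter_congr fun i _ => and_iff_right (hx i).1
  rw [hfil]
  set S := Finset.univ.filter (fun i : Fin N => x i < b) with hS
  set C := S.card with hC
  rw [abs_le]
  constructor
  · -- b - C/N ≤ B
    rw [neg_le, neg_sub]
    rcases lt_or_ge C N with hCN | hCN
    · have hcompl : Sᶜ.Nonempty := by
        rw [← Finset.card_pos, Finset.card_compl]
        simp only [Fintype.card_fin]
        omega
      set m := Sᶜ.min' hcompl with hm
      have hmb : b ≤ x m := by
        have : m ∈ Sᶜ := Sᶜ.min'_mem hcompl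
        rw [Finset.mem_compl, hS, Finset.mem_filter] at this
        push_neg at this
        exact this (Finset.mem_univ m)
      have hsub : Finset.Iio m ⊆ S := by
        intro i hi
        rw [Finset.mem_Iio] at hi
        by_contra hiS
        have : m ≤ i := Sᶜ.min'_le i (Finset.mem_compl.mpr hiS)
        exact absurd hi (not_lt.mpr this)
      have hmC : (m : ℕ) ≤ C := by
        have := Finset.card_le_card hsub
        rwa [Fin.card_Iio] at this
      have hmC' : ((m:ℕ):ℝ) ≤ (C:ℝ) := by exact_mod_cast hmC
      have h1 : (((m:ℕ):ℝ)+1)/N ≤ ((C:ℝ)+1)/N := by gcongr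
      have h2 : ((C:ℝ)+1)/N + (R+2)/N = (C:ℝ)/N + (R+3)/N := by ring
      have h3 := high m
      linarith
    · have hCeq : C = N := le_antisymm (by simpa using Finset.card_le_univ S) hCN
      have : (C:ℝ)/N = 1 := by rw [hCeq]; field_simp
      rw [this]; linarith
  · -- C/N - b ≤ B
    rcases Finset.eq_empty_or_nonempty S with hSe | hSne
    · rw [hC, hSe]
      simp only [Finset.card_empty, Nat.cast_zero, zero_div]
      linarith
    · set m := S.max' hSne with hm
      have hmb : x m < b := by
        have : m ∈ S := S.max'_mem hSne
        rw [hS, Finset.mem_filter] at this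
        exact this.2
      have hsub : S ⊆ Finset.Iic m := fun i hi => Finset.mem_Iic.mpr (S.le_max' i hi)
      have hmC : C ≤ (m : ℕ) + 1 := by
        have := Finset.card_le_card hsub
        rwa [Fin.card_Iic] at this
      have hmC' : (C:ℝ) ≤ ((m:ℕ):ℝ) + 1 := by exact_mod_cast hmC
      have h1 : (C:ℝ)/N ≤ (((m:ℕ):ℝ)+1)/N := by gcongr
      have h2 := low m
      have h3 : 0 ≤ (R+3)/N := div_nonneg (by linarith) hN0.le
      linarith
end
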